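/- Let μ be a probability measure on 2^X satisfying the FKG condition, and let p_1, p_2, p_3, … be a sequence of functions 2^X → ℝ, each of which is a linear combination with nonnegative coefficients of unimodal monotone nondecreasing Boolean functions. Then for every N ≥ 1, Σ_{n=1}^{N} (1/n!) · Σ_{(i_1,…,i_n)} E_{n,μ}(p_{i_1},…,p_{i_n}) ≥ 0, where the inner sum runs over all n-tuples (i_1,…,i_n) of positive integers with i_1 + ⋯ + i_n = N. (These sums are the coefficients of the formal power series 1 − ∏_{A⊆X} (1 − p(A))^{μ(A)} with p(A) = Σ_k p_k(A) t^k, so all coefficients of that series are nonnegative.) -/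

import Mathlib

open Finset
open scoped Classical

noncomputable section

/-- `μ` is a probability measure on `2^X`. -/
def IsProbMeasure {m : ℕ} (μ : Finset (Fin m) → ℝ) : Prop :=
  (∀ A, 0 ≤ μ A) ∧ ∑ A : Finset (Fin m), μ A = 1

/-- The FKG lattice condition on `μ`. -/
def FKGCondition {m : ℕ} (μ : Finset (Fin m) → ℝ) : Prop :=
  ∀ A B : Finset (Fin m), μ A * μ B ≤ μ (A ∩ B) * μ (A ∪ B)

/-- Expectation of `f` with respect to `μ`. -/
def expect {m : ℕ} (μ : Finset (Fin m) → ℝ) (f : Finset (Fin m) → ℝ) : ℝ :=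
  ∑ A : Finset (Fin m), f A * μ A

/-- `P` is a set partition of `Fin n`. -/
def IsSetPartition {n : ℕ} (P : Finset (Finset (Fin n))) : Prop :=
  ∅ ∉ P ∧ ∀ i : Fin n, ∃! B, B ∈ P ∧ i ∈ B

/-- The finite set of all set partitions of `Fin n`. -/
def setPartitions (n : ℕ) : Finset (Finset (Finset (Fin n))) :=
  Finset.univ.filter IsSetPartition

/-- The functional `E_{n,μ}(f_1,…,f_n)`. -/
def Efun {m n : ℕ} (μ : Finset (Fin m) → ℝ) (f : Fin n → Finset (Fin m) → ℝ) : ℝ :=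
  ∑ P ∈ setPartitions n,
    (-1 : ℝ) ^ (P.card + 1) *
      (∏ B ∈ P, ((B.card - 1).factorial : ℝ)) *
      ∏ B ∈ P, expect μ (fun A => ∏ i ∈ B, f i A)

variable {ι : Type*} [DecidableEq ι]

/-- All set partitions of a finite set `S`. -/
def partitionsOf (S : Finset ι) : Finset (Finset (Finset ι)) :=
  (S.powerset.powerset).filter (fun P => ∅ ∉ P ∧ ∀ x ∈ S, ∃! B, B ∈ P ∧ x ∈ B)

lemma mem_partitionsOf {S : Finset ι} {P : Finset (Finset ι)} :
    P ∈ partitionsOf S ↔ (∀ B ∈ P, B ⊆ S) ∧ ∅ ∉ P ∧ ∀ x ∈ S, ∃! B, B ∈ P ∧ x ∈ B := by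
  unfold partitionsOf
  rw [Finset.mem_filter, Finset.mem_powerset]
  constructor
  · rintro ⟨h1, h2, h3⟩
    exact ⟨fun B hB => Finset.mem_powerset.1 (h1 hB), h2, h3⟩
  · rintro ⟨h1, h2, h3⟩
    exact ⟨fun B hB => Finset.mem_powerset.2 (h1 B hB), h2, h3⟩

/-- Partition-type exponential sum: `∑_{P partition of S} ∏_{B ∈ P} c B`. -/
def Epart (c : Finset ι → ℝ) (S : Finset ι) : ℝ :=
  ∑ P ∈ partitionsOf S, ∏ B ∈ P, c B

lemma partitionsOf_empty : partitionsOf (∅ : Finset ι) = {∅} := by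
  ext P
  rw [mem_partitionsOf, Finset.mem_singleton]
  constructor
  · rintro ⟨h1, h2, _⟩
    by_contra hne
    obtain ⟨B, hB⟩ := Finset.nonempty_iff_ne_empty.2 hne
    have hBsub := h1 B hB
    have : B = ∅ := Finset.subset_empty.1 hBsub
    exact h2 (this ▸ hB)
  · rintro rfl
    exact ⟨fun B hB => absurd hB (Finset.notMem_empty B),
      Finset.notMem_empty ∅, fun x hx => absurd hx (Finset.notMem_empty x)⟩

lemma Epart_empty (c : Finset ι → ℝ) : Epart c ∅ = 1 := by
  rw [Epart, partitionsOf_empty, Finset.sum_singleton, Finset.prod_empty]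

lemma insert_mem_partitionsOf {S T : Finset ι} {x : ι} (hxT : x ∈ T) (hTS : T ⊆ S)
    {Q : Finset (Finset ι)} (hQ : Q ∈ partitionsOf (S \ T)) :
    insert T Q ∈ partitionsOf S := by
  obtain ⟨hQ1, hQ2, hQ3⟩ := mem_partitionsOf.1 hQ
  refine mem_partitionsOf.2 ⟨?_, ?_, ?_⟩
  · intro B hB
    rcases Finset.mem_insert.1 hB with rfl | hB'
    · exact hTS
    · exact (hQ1 B hB').trans Finset.sdiff_subset
  · intro h
    rcases Finset.mem_insert.1 h with h' | h'
    · exact (Finset.notMem_empty x) (h' ▸ hxT)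
    · exact hQ2 h'
  · intro y hy
    by_cases hyT : y ∈ T
    · refine ⟨T, ⟨Finset.mem_insert_self _ _, hyT⟩, ?_⟩
      rintro B ⟨hB, hyB⟩
      rcases Finset.mem_insert.1 hB with rfl | hB'
      · rfl
      · exact absurd (hQ1 B hB' hyB) (by simp [hyT])
    · obtain ⟨B, ⟨hB1, hB2⟩, hBu⟩ := hQ3 y (Finset.mem_sdiff.2 ⟨hy, hyT⟩)
      refine ⟨B, ⟨Finset.mem_insert_of_mem hB1, hB2⟩, ?_⟩
      rintro B' ⟨hB', hyB'⟩
      rcases Finset.mem_insert.1 hB' with rfl | hB''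
      · exact absurd hyB' hyT
      · exact hBu B' ⟨hB'', hyB'⟩

lemma exists_unique_block {S : Finset ι} {P : Finset (Finset ι)} (hP : P ∈ partitionsOf S)
    {x : ι} (hx : x ∈ S) : ∃! B, B ∈ P ∧ x ∈ B :=
  (mem_partitionsOf.1 hP).2.2 x hx

/-- The block of `x` in a partition `P` of `S`. -/
def blockOf {S : Finset ι} {P : Finset (Finset ι)} (hP : P ∈ partitionsOf S)
    {x : ι} (hx : x ∈ S) : Finset ι :=
  Finset.choose (fun B => x ∈ B) P (exists_unique_block hP hx)

lemma blockOf_mem {S : Finset ι} {P : Finset (Finset ι)} (hP : P ∈ partitionsOf S)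
    {x : ι} (hx : x ∈ S) : blockOf hP hx ∈ P :=
  Finset.choose_mem _ _ _

lemma mem_blockOf {S : Finset ι} {P : Finset (Finset ι)} (hP : P ∈ partitionsOf S)
    {x : ι} (hx : x ∈ S) : x ∈ blockOf hP hx :=
  Finset.choose_property (fun B => x ∈ B) P (exists_unique_block hP hx)

lemma blocks_eq_of_mem {S : Finset ι} {P : Finset (Finset ι)} (hP : P ∈ partitionsOf S)
    {y : ι} (hy : y ∈ S) {B B' : Finset ι} (hB : B ∈ P) (hB' : B' ∈ P)
    (hyB : y ∈ B) (hyB' : y ∈ B') : B = B' := by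
  obtain ⟨C, _, hCu⟩ := exists_unique_block hP hy
  rw [hCu B ⟨hB, hyB⟩, hCu B' ⟨hB', hyB'⟩]

lemma blockOf_eq {S : Finset ι} {P : Finset (Finset ι)} (hP : P ∈ partitionsOf S)
    {x : ι} (hx : x ∈ S) {B : Finset ι} (hB : B ∈ P) (hxB : x ∈ B) : B = blockOf hP hx :=
  blocks_eq_of_mem hP hx hB (blockOf_mem hP hx) hxB (mem_blockOf hP hx)

lemma erase_mem_partitionsOf {S : Finset ι} {P : Finset (Finset ι)} (hP : P ∈ partitionsOf S)
    {x : ι} (hx : x ∈ S) :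
    P.erase (blockOf hP hx) ∈ partitionsOf (S \ blockOf hP hx) := by
  obtain ⟨h1, h2, h3⟩ := mem_partitionsOf.1 hP
  refine mem_partitionsOf.2 ⟨?_, ?_, ?_⟩
  · intro B hB
    obtain ⟨hBne, hBP⟩ := Finset.mem_erase.1 hB
    intro y hyB
    refine Finset.mem_sdiff.2 ⟨h1 B hBP hyB, fun hyB₀ => ?_⟩
    exact hBne (blocks_eq_of_mem hP (h1 B hBP hyB) hBP (blockOf_mem hP hx) hyB hyB₀)
  · exact fun h => h2 (Finset.mem_of_mem_erase h)
  · intro y hy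
    obtain ⟨hyS, hyB₀⟩ := Finset.mem_sdiff.1 hy
    obtain ⟨B, ⟨hB1, hB2⟩, hBu⟩ := h3 y hyS
    have hBne : B ≠ blockOf hP hx := fun h => hyB₀ (h ▸ hB2)
    refine ⟨B, ⟨Finset.mem_erase.2 ⟨hBne, hB1⟩, hB2⟩, ?_⟩
    rintro B' ⟨hB', hyB'⟩
    exact hBu B' ⟨Finset.mem_of_mem_erase hB', hyB'⟩

/-- Peeling the block of a fixed element `x ∈ S`. -/
lemma Epart_peel (c : Finset ι → ℝ) {S : Finset ι} {x : ι} (hx : x ∈ S) :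
    Epart c S = ∑ T ∈ S.powerset.filter (fun T => x ∈ T), c T * Epart c (S \ T) := by
  unfold Epart
  have key : ∑ P ∈ partitionsOf S, ∏ B ∈ P, c B =
      ∑ q ∈ (S.powerset.filter (fun T => x ∈ T)).sigma (fun T => partitionsOf (S \ T)),
        c q.1 * ∏ B ∈ q.2, c B := by
    refine Finset.sum_nbij'
      (i := fun P => if h : P ∈ partitionsOf S then
        ⟨blockOf h hx, P.erase (blockOf h hx)⟩ else ⟨∅, ∅⟩)
      (j := fun q => insert q.1 q.2) ?_ ?_ ?_ ?_ ?_
    · intro P hP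
      simp only [hP, dif_pos]
      refine Finset.mem_sigma.2 ⟨?_, erase_mem_partitionsOf hP hx⟩
      rw [Finset.mem_filter, Finset.mem_powerset]
      exact ⟨(mem_partitionsOf.1 hP).1 _ (blockOf_mem hP hx), mem_blockOf hP hx⟩
    · rintro ⟨T, Q⟩ hq
      obtain ⟨hT, hQ⟩ := Finset.mem_sigma.1 hq
      rw [Finset.mem_filter, Finset.mem_powerset] at hT
      exact insert_mem_partitionsOf hT.2 hT.1 hQ
    · intro P hP
      simp only [hP, dif_pos]
      exact Finset.insert_erase (blockOf_mem hP hx)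
    · rintro ⟨T, Q⟩ hq
      obtain ⟨hT, hQ⟩ := Finset.mem_sigma.1 hq
      rw [Finset.mem_filter, Finset.mem_powerset] at hT
      have hmem := insert_mem_partitionsOf hT.2 hT.1 hQ
      simp only [hmem, dif_pos]
      have hTblk : T = blockOf hmem hx :=
        blockOf_eq hmem hx (Finset.mem_insert_self _ _) hT.2
      have hTQ : T ∉ Q := by
        intro hTQ
        have := (mem_partitionsOf.1 hQ).1 T hTQ hT.2
        exact (Finset.mem_sdiff.1 this).2 hT.2
      have h2 : (insert T Q).erase T = Q := Finset.erase_insert hTQ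
      refine Sigma.ext ?_ ?_
      · exact hTblk.symm
      · rw [← hTblk] at *
        simpa using h2
    · intro P hP
      simp only [hP, dif_pos]
      exact (Finset.mul_prod_erase P c (blockOf_mem hP hx)).symm
  rw [key, Finset.sum_sigma]
  refine Finset.sum_congr rfl fun T _ => ?_
  rw [Finset.mul_sum]

lemma sup_of_partition {S : Finset ι} {P : Finset (Finset ι)} (hP : P ∈ partitionsOf S) :
    P.sup id = S := by
  obtain ⟨h1, _, h3⟩ := mem_partitionsOf.1 hP
  apply Finset.Subset.antisymm
  · exact Finset.sup_le fun B hB => h1 B hB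
  · intro x hx
    obtain ⟨B, ⟨hB1, hB2⟩, _⟩ := h3 x hx
    exact Finset.mem_sup.2 ⟨B, hB1, hB2⟩

lemma subset_mem_partitionsOf {S : Finset ι} {P : Finset (Finset ι)} (hP : P ∈ partitionsOf S)
    {Q : Finset (Finset ι)} (hQ : Q ⊆ P) : Q ∈ partitionsOf (Q.sup id) := by
  obtain ⟨h1, h2, h3⟩ := mem_partitionsOf.1 hP
  refine mem_partitionsOf.2 ⟨?_, ?_, ?_⟩
  · exact fun B hB => Finset.le_sup (f := id) hB
  · exact fun h => h2 (hQ h)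
  · intro x hx
    obtain ⟨B, hB1, hB2⟩ := Finset.mem_sup.1 hx
    refine ⟨B, ⟨hB1, hB2⟩, ?_⟩
    rintro B' ⟨hB', hxB'⟩
    exact blocks_eq_of_mem hP (h1 B (hQ hB1) hB2) (hQ hB') (hQ hB1) hxB' hB2

lemma sdiff_mem_partitionsOf {S : Finset ι} {P : Finset (Finset ι)} (hP : P ∈ partitionsOf S)
    {Q : Finset (Finset ι)} (hQ : Q ⊆ P) : P \ Q ∈ partitionsOf (S \ Q.sup id) := by
  obtain ⟨h1, h2, h3⟩ := mem_partitionsOf.1 hP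
  refine mem_partitionsOf.2 ⟨?_, ?_, ?_⟩
  · intro B hB y hyB
    obtain ⟨hBP, hBQ⟩ := Finset.mem_sdiff.1 hB
    refine Finset.mem_sdiff.2 ⟨h1 B hBP hyB, fun hyW => ?_⟩
    obtain ⟨B', hB'1, hB'2⟩ := Finset.mem_sup.1 hyW
    exact hBQ ((blocks_eq_of_mem hP (h1 B hBP hyB) hBP (hQ hB'1) hyB hB'2) ▸ hB'1)
  · exact fun h => h2 (Finset.mem_sdiff.1 h).1
  · intro y hy
    obtain ⟨hyS, hyW⟩ := Finset.mem_sdiff.1 hy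
    obtain ⟨B, ⟨hB1, hB2⟩, hBu⟩ := h3 y hyS
    have hBQ : B ∉ Q := fun h => hyW (Finset.mem_sup.2 ⟨B, h, hB2⟩)
    refine ⟨B, ⟨Finset.mem_sdiff.2 ⟨hB1, hBQ⟩, hB2⟩, ?_⟩
    rintro B' ⟨hB', hyB'⟩
    exact hBu B' ⟨(Finset.mem_sdiff.1 hB').1, hyB'⟩

lemma union_mem_partitionsOf {S W : Finset ι} (hWS : W ⊆ S)
    {Qa Qb : Finset (Finset ι)} (hQa : Qa ∈ partitionsOf W) (hQb : Qb ∈ partitionsOf (S \ W)) :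
    Qa ∪ Qb ∈ partitionsOf S := by
  obtain ⟨ha1, ha2, ha3⟩ := mem_partitionsOf.1 hQa
  obtain ⟨hb1, hb2, hb3⟩ := mem_partitionsOf.1 hQb
  refine mem_partitionsOf.2 ⟨?_, ?_, ?_⟩
  · intro B hB
    rcases Finset.mem_union.1 hB with h | h
    · exact (ha1 B h).trans hWS
    · exact (hb1 B h).trans Finset.sdiff_subset
  · intro h
    rcases Finset.mem_union.1 h with h | h
    · exact ha2 h
    · exact hb2 h
  · intro y hy
    by_cases hyW : y ∈ W
    · obtain ⟨B, ⟨hB1, hB2⟩, hBu⟩ := ha3 y hyW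
      refine ⟨B, ⟨Finset.mem_union_left _ hB1, hB2⟩, ?_⟩
      rintro B' ⟨hB', hyB'⟩
      rcases Finset.mem_union.1 hB' with h | h
      · exact hBu B' ⟨h, hyB'⟩
      · exact absurd (Finset.mem_sdiff.1 (hb1 B' h hyB')).2 (by simp [hyW])
    · obtain ⟨B, ⟨hB1, hB2⟩, hBu⟩ := hb3 y (Finset.mem_sdiff.2 ⟨hy, hyW⟩)
      refine ⟨B, ⟨Finset.mem_union_right _ hB1, hB2⟩, ?_⟩
      rintro B' ⟨hB', hyB'⟩
      rcases Finset.mem_union.1 hB' with h | h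
      · exact absurd (ha1 B' h hyB') hyW
      · exact hBu B' ⟨h, hyB'⟩

lemma partition_disjoint {S W : Finset ι} (hWS : W ⊆ S)
    {Qa Qb : Finset (Finset ι)} (hQa : Qa ∈ partitionsOf W) (hQb : Qb ∈ partitionsOf (S \ W)) :
    Qa ∩ Qb = ∅ := by
  obtain ⟨ha1, ha2, _⟩ := mem_partitionsOf.1 hQa
  obtain ⟨hb1, hb2, _⟩ := mem_partitionsOf.1 hQb
  rw [Finset.eq_empty_iff_forall_notMem]
  intro B hB
  obtain ⟨hBa, hBb⟩ := Finset.mem_inter.1 hB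
  obtain ⟨y, hy⟩ := Finset.nonempty_iff_ne_empty.2 (fun h => ha2 (h ▸ hBa))
  exact (Finset.mem_sdiff.1 (hb1 B hBb hy)).2 (ha1 B hBa hy)

/-- Convolution identity: `E_{c+d}(S) = ∑_{W ⊆ S} E_c(W) E_d(S∖W)`. -/
lemma Epart_add (cf cg : Finset ι → ℝ) (S : Finset ι) :
    Epart (fun B => cf B + cg B) S = ∑ W ∈ S.powerset, Epart cf W * Epart cg (S \ W) := by
  unfold Epart
  have lhs : ∑ P ∈ partitionsOf S, ∏ B ∈ P, (cf B + cg B) =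
      ∑ q ∈ (partitionsOf S).sigma (fun P => P.powerset),
        (∏ B ∈ q.2, cf B) * ∏ B ∈ q.1 \ q.2, cg B := by
    rw [Finset.sum_sigma]
    exact Finset.sum_congr rfl fun P _ => Finset.prod_add cf cg P
  have rhs : ∑ W ∈ S.powerset, (∑ Qa ∈ partitionsOf W, ∏ B ∈ Qa, cf B) *
        (∑ Qb ∈ partitionsOf (S \ W), ∏ B ∈ Qb, cg B) =
      ∑ q ∈ S.powerset.sigma (fun W => partitionsOf W ×ˢ partitionsOf (S \ W)),
        (∏ B ∈ q.2.1, cf B) * ∏ B ∈ q.2.2, cg B := by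
    rw [Finset.sum_sigma]
    refine Finset.sum_congr rfl fun W _ => ?_
    rw [Finset.sum_mul_sum, Finset.sum_product]
  rw [lhs, rhs]
  refine Finset.sum_nbij'
    (i := fun q => ⟨q.2.sup id, (q.2, q.1 \ q.2)⟩)
    (j := fun q => ⟨q.2.1 ∪ q.2.2, q.2.1⟩) ?_ ?_ ?_ ?_ ?_
  · rintro ⟨P, Q⟩ hq
    obtain ⟨hP, hQ⟩ := Finset.mem_sigma.1 hq
    rw [Finset.mem_powerset] at hQ
    refine Finset.mem_sigma.2 ⟨?_, ?_⟩
    · rw [Finset.mem_powerset]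
      exact (Finset.sup_le fun B hB => (mem_partitionsOf.1 hP).1 B (hQ hB))
    · exact Finset.mem_product.2 ⟨subset_mem_partitionsOf hP hQ, sdiff_mem_partitionsOf hP hQ⟩
  · rintro ⟨W, Qa, Qb⟩ hq
    obtain ⟨hW, hquad⟩ := Finset.mem_sigma.1 hq
    obtain ⟨hQa, hQb⟩ := Finset.mem_product.1 hquad
    rw [Finset.mem_powerset] at hW
    refine Finset.mem_sigma.2 ⟨union_mem_partitionsOf hW hQa hQb, ?_⟩
    rw [Finset.mem_powerset]
    exact Finset.subset_union_left
  · rintro ⟨P, Q⟩ hq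
    obtain ⟨hP, hQ⟩ := Finset.mem_sigma.1 hq
    rw [Finset.mem_powerset] at hQ
    refine Sigma.ext ?_ (heq_of_eq ?_)
    · exact Finset.union_sdiff_of_subset hQ
    · rfl
  · rintro ⟨W, Qa, Qb⟩ hq
    obtain ⟨hW, hquad⟩ := Finset.mem_sigma.1 hq
    obtain ⟨hQa, hQb⟩ := Finset.mem_product.1 hquad
    rw [Finset.mem_powerset] at hW
    have hsup : Qa.sup id = W := sup_of_partition hQa
    have hdisj : Qa ∩ Qb = ∅ := partition_disjoint hW hQa hQb
    have hsd : (Qa ∪ Qb) \ Qa = Qb := by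
      rw [Finset.union_sdiff_left, Finset.sdiff_eq_self_iff_disjoint]
      rw [Finset.disjoint_iff_inter_eq_empty, Finset.inter_comm]
      exact hdisj
    refine Sigma.ext hsup (heq_of_eq ?_)
    show (Qa, (Qa ∪ Qb) \ Qa) = (Qa, Qb)
    rw [hsd]
  · rintro ⟨P, Q⟩ hq
    rfl

lemma Epart_nonneg {c : Finset ι → ℝ} (hc : ∀ B, 0 ≤ c B) (S : Finset ι) : 0 ≤ Epart c S :=
  Finset.sum_nonneg fun P _ => Finset.prod_nonneg fun B _ => hc B


/-- Key identity: `∑_{T ⊆ W} |T|!·t(T)·g(W∖T) = (1−|W|)·g(W)` where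
`g = Epart (fun B => -(|B|-1)!·t B)`. -/
lemma Epart_fact_sum (t : Finset ι → ℝ) (ht : t ∅ = 1) (S : Finset ι) :
    ∑ T ∈ S.powerset, (T.card.factorial : ℝ) * t T *
      Epart (fun B => -(((B.card - 1).factorial : ℝ) * t B)) (S \ T)
    = (1 - (S.card : ℝ)) * Epart (fun B => -(((B.card - 1).factorial : ℝ) * t B)) S := by
  set c : Finset ι → ℝ := fun B => -(((B.card - 1).factorial : ℝ) * t B) with hc
  have hmem : (∅ : Finset ι) ∈ S.powerset := Finset.mem_powerset.2 (Finset.empty_subset S)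
  rw [← Finset.sum_erase_add _ _ hmem]
  have hempty : ((∅ : Finset ι).card.factorial : ℝ) * t ∅ * Epart c (S \ ∅) = Epart c S := by
    simp [ht]
  rw [hempty]
  have step1 : ∑ T ∈ S.powerset.erase ∅, (T.card.factorial : ℝ) * t T * Epart c (S \ T)
      = ∑ T ∈ S.powerset.erase ∅, ∑ x ∈ T,
          ((T.card - 1).factorial : ℝ) * t T * Epart c (S \ T) := by
    refine Finset.sum_congr rfl fun T hT => ?_
    obtain ⟨hTne, _⟩ := Finset.mem_erase.1 hT
    have hcard : 0 < T.card := Finset.card_pos.2 (Finset.nonempty_iff_ne_empty.2 hTne)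
    rw [Finset.sum_const, nsmul_eq_mul]
    have : (T.card : ℝ) * ((T.card - 1).factorial : ℝ) = (T.card.factorial : ℝ) := by
      rw [← Nat.cast_mul, Nat.mul_factorial_pred hcard.ne']
    rw [← mul_assoc, ← mul_assoc, this]
  rw [step1]
  have step2 : ∑ T ∈ S.powerset.erase ∅, ∑ x ∈ T,
        ((T.card - 1).factorial : ℝ) * t T * Epart c (S \ T)
      = ∑ x ∈ S, ∑ T ∈ S.powerset.filter (fun T => x ∈ T),
          ((T.card - 1).factorial : ℝ) * t T * Epart c (S \ T) := by
    have hsub : ∀ T ∈ S.powerset.erase ∅, ∑ x ∈ T,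
        ((T.card - 1).factorial : ℝ) * t T * Epart c (S \ T)
        = ∑ x ∈ S, if x ∈ T then ((T.card - 1).factorial : ℝ) * t T * Epart c (S \ T) else 0 := by
      intro T hT
      rw [Finset.sum_ite_mem, Finset.inter_comm, Finset.inter_eq_left.2
        (Finset.mem_powerset.1 (Finset.mem_of_mem_erase hT))]
    rw [Finset.sum_congr rfl hsub, Finset.sum_comm]
    refine Finset.sum_congr rfl fun x hx => ?_
    rw [Finset.sum_ite, Finset.sum_const_zero, add_zero]
    refine Finset.sum_congr ?_ (fun _ _ => rfl)
    ext T
    simp only [Finset.mem_filter, Finset.mem_erase]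
    constructor
    · rintro ⟨⟨_, h1⟩, h2⟩; exact ⟨h1, h2⟩
    · rintro ⟨h1, h2⟩
      exact ⟨⟨fun h => (Finset.notMem_empty x) (h ▸ h2), h1⟩, h2⟩
  rw [step2]
  have step3 : ∀ x ∈ S, ∑ T ∈ S.powerset.filter (fun T => x ∈ T),
      ((T.card - 1).factorial : ℝ) * t T * Epart c (S \ T) = - Epart c S := by
    intro x hx
    rw [Epart_peel c hx]
    rw [← Finset.sum_neg_distrib]
    refine Finset.sum_congr rfl fun T _ => ?_
    rw [hc]
    ring
  rw [Finset.sum_congr rfl step3, Finset.sum_const, nsmul_eq_mul]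
  ring

/-! ### Measure-theoretic lemmas -/

variable {m : ℕ}

/-- Measure of the principal up-set generated by `D`. -/
def ups (μ : Finset (Fin m) → ℝ) (D : Finset (Fin m)) : ℝ :=
  ∑ A : Finset (Fin m), (if D ⊆ A then (1 : ℝ) else 0) * μ A

lemma ups_nonneg {μ : Finset (Fin m) → ℝ} (hμ : ∀ A, 0 ≤ μ A) (D : Finset (Fin m)) :
    0 ≤ ups μ D :=
  Finset.sum_nonneg fun A _ => mul_nonneg (by positivity) (hμ A)

lemma ups_empty {μ : Finset (Fin m) → ℝ} (hμ : IsProbMeasure μ) : ups μ ∅ = 1 := by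
  unfold ups
  simp only [Finset.empty_subset, if_true, one_mul]
  exact hμ.2

lemma ups_mono {μ : Finset (Fin m) → ℝ} (hμ : ∀ A, 0 ≤ μ A) {D E : Finset (Fin m)}
    (hDE : D ⊆ E) : ups μ E ≤ ups μ D := by
  refine Finset.sum_le_sum fun A _ => ?_
  by_cases h : E ⊆ A
  · simp [h, hDE.trans h]
  · simp only [h, if_false, zero_mul]
    exact mul_nonneg (by positivity) (hμ A)

/-- Harris inequality for principal up-sets, from the four functions theorem. -/
lemma harris {μ : Finset (Fin m) → ℝ} (hμ : IsProbMeasure μ) (hFKG : FKGCondition μ)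
    (D E : Finset (Fin m)) : ups μ D * ups μ E ≤ ups μ (D ∪ E) := by
  have hmono : ∀ D : Finset (Fin m), Monotone (fun A => if D ⊆ A then (1 : ℝ) else 0) := by
    intro D A B hAB
    by_cases h : D ⊆ A
    · simp [h, h.trans hAB]
    · simp only [h, if_false]
      by_cases h' : D ⊆ B <;> simp [h']
  have hnn : ∀ D : Finset (Fin m), 0 ≤ (fun A => if D ⊆ A then (1 : ℝ) else 0) := by
    intro D A
    by_cases h : D ⊆ A <;> simp [h]
  have := fkg (fun A => if D ⊆ A then (1 : ℝ) else 0)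
    (fun A => if E ⊆ A then (1 : ℝ) else 0) μ hμ.1 (hnn D) (hnn E) (hmono D) (hmono E)
    (fun a b => by rw [Finset.inf_eq_inter, Finset.sup_eq_union]; exact hFKG a b)
  have hexp : ∀ D : Finset (Fin m),
      (∑ A : Finset (Fin m), μ A * (if D ⊆ A then (1 : ℝ) else 0)) = ups μ D := by
    intro D
    exact Finset.sum_congr rfl fun A _ => mul_comm _ _
  rw [hexp D, hexp E, hμ.2, one_mul] at this
  refine this.trans (le_of_eq ?_)
  unfold ups
  refine Finset.sum_congr rfl fun A _ => ?_
  rw [mul_comm]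
  congr 1
  by_cases hD : D ⊆ A <;> by_cases hE : E ⊆ A <;>
    simp [hD, hE, Finset.union_subset_iff]

/-- Conditioning on the principal up-set of `D`. -/
def condm (μ : Finset (Fin m) → ℝ) (D : Finset (Fin m)) : Finset (Fin m) → ℝ :=
  fun A => μ A * (if D ⊆ A then (1 : ℝ) else 0) / ups μ D

lemma condm_prob {μ : Finset (Fin m) → ℝ} (hμ : IsProbMeasure μ) {D : Finset (Fin m)}
    (hD : 0 < ups μ D) : IsProbMeasure (condm μ D) := by
  constructor
  · intro A
    unfold condm
    have h1 : (0:ℝ) ≤ (if D ⊆ A then (1:ℝ) else 0) := by positivity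
    exact div_nonneg (mul_nonneg (hμ.1 A) h1) hD.le
  · unfold condm
    rw [← Finset.sum_div]
    rw [div_eq_one_iff_eq (ne_of_gt hD)]
    unfold ups
    exact Finset.sum_congr rfl fun A _ => mul_comm _ _

lemma condm_fkg {μ : Finset (Fin m) → ℝ} (hμ : IsProbMeasure μ) (hFKG : FKGCondition μ)
    {D : Finset (Fin m)} (hD : 0 < ups μ D) : FKGCondition (condm μ D) := by
  intro A B
  unfold condm
  rw [div_mul_div_comm, div_mul_div_comm, div_le_div_iff₀ (by positivity) (by positivity)]
  have key : (if D ⊆ A then (1:ℝ) else 0) * (if D ⊆ B then (1:ℝ) else 0)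
      = (if D ⊆ A ∩ B then (1:ℝ) else 0) * (if D ⊆ A ∪ B then (1:ℝ) else 0) := by
    by_cases hA : D ⊆ A <;> by_cases hB : D ⊆ B
    · have h1 : D ⊆ A ∩ B := Finset.subset_inter hA hB
      have h2 : D ⊆ A ∪ B := hA.trans Finset.subset_union_left
      simp [hA, hB, h1, h2]
    · have h1 : ¬ D ⊆ A ∩ B := fun h => hB (h.trans Finset.inter_subset_right)
      simp [hA, hB, h1]
    · have h1 : ¬ D ⊆ A ∩ B := fun h => hA (h.trans Finset.inter_subset_left)
      simp [hA, hB, h1]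
    · have h1 : ¬ D ⊆ A ∩ B := fun h => hA (h.trans Finset.inter_subset_left)
      simp [hA, hB, h1]
  calc μ A * (if D ⊆ A then (1:ℝ) else 0) * (μ B * (if D ⊆ B then (1:ℝ) else 0)) * (ups μ D * ups μ D)
      = (μ A * μ B) * ((if D ⊆ A then (1:ℝ) else 0) * (if D ⊆ B then (1:ℝ) else 0)) * (ups μ D * ups μ D) := by ring
    _ ≤ (μ (A ∩ B) * μ (A ∪ B)) * ((if D ⊆ A ∩ B then (1:ℝ) else 0) * (if D ⊆ A ∪ B then (1:ℝ) else 0)) * (ups μ D * ups μ D) := by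
        rw [key]
        have h1 : (0:ℝ) ≤ (if D ⊆ A ∩ B then (1:ℝ) else 0) * (if D ⊆ A ∪ B then (1:ℝ) else 0) := by
          have : (0:ℝ) ≤ (if D ⊆ A ∩ B then (1:ℝ) else 0) := by positivity
          have : (0:ℝ) ≤ (if D ⊆ A ∪ B then (1:ℝ) else 0) := by positivity
          positivity
        refine mul_le_mul_of_nonneg_right (mul_le_mul_of_nonneg_right (hFKG A B) h1) ?_
        positivity
    _ = μ (A ∩ B) * (if D ⊆ A ∩ B then (1:ℝ) else 0) * (μ (A ∪ B) * (if D ⊆ A ∪ B then (1:ℝ) else 0)) * (ups μ D * ups μ D) := by ring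

lemma ups_condm {μ : Finset (Fin m) → ℝ} {D : Finset (Fin m)} (E : Finset (Fin m)) :
    ups (condm μ D) E = ups μ (D ∪ E) / ups μ D := by
  unfold ups condm
  simp only [← mul_div_assoc]
  rw [← Finset.sum_div]
  congr 1
  refine Finset.sum_congr rfl fun A _ => ?_
  by_cases hD : D ⊆ A <;> by_cases hE : E ⊆ A
  · simp [hD, hE, Finset.union_subset hD hE]
  · have : ¬ (D ∪ E ⊆ A) := fun h => hE (Finset.union_subset_iff.1 h).2
    simp [hD, hE, this]
  · have : ¬ (D ∪ E ⊆ A) := fun h => hD (Finset.union_subset_iff.1 h).1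
    simp [hD, hE, this]
  · have : ¬ (D ∪ E ⊆ A) := fun h => hD (Finset.union_subset_iff.1 h).1
    simp [hD, hE, this]

/-! ### Set-difference helper identities -/

lemma sdiff_eq_erase_sdiff {S T : Finset ι} {x : ι} (hxT : x ∈ T) :
    S \ T = (S.erase x) \ (T.erase x) := by
  ext a
  simp only [Finset.mem_sdiff, Finset.mem_erase]
  constructor
  · rintro ⟨haS, haT⟩
    exact ⟨⟨fun h => haT (h ▸ hxT), haS⟩, fun ⟨_, h⟩ => haT h⟩
  · rintro ⟨⟨hax, haS⟩, h⟩
    exact ⟨haS, fun haT => h ⟨hax, haT⟩⟩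

lemma sd_roundtrip1 {S T Y : Finset ι} (hT : T ⊆ S) (hY : Y ⊆ S \ T) :
    (S \ ((S \ T) \ Y)) \ T = Y := by
  ext a
  have h1 : a ∈ Y → a ∈ S ∧ a ∉ T := fun ha => Finset.mem_sdiff.1 (hY ha)
  simp only [Finset.mem_sdiff]
  tauto

lemma sd_roundtrip2 {S Z T : Finset ι} (hZ : Z ⊆ S) (hT : T ⊆ S \ Z) :
    (S \ T) \ ((S \ Z) \ T) = Z := by
  ext a
  have h1 : a ∈ Z → a ∈ S := fun ha => hZ ha
  have h2 : a ∈ T → a ∈ S ∧ a ∉ Z := fun ha => Finset.mem_sdiff.1 (hT ha)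
  simp only [Finset.mem_sdiff]
  tauto

/-- Reindexing sums over pairs of disjoint subsets. -/
lemma sum_powerset_pair_reindex (S : Finset ι) (f : Finset ι → Finset ι → Finset ι → ℝ) :
    ∑ T ∈ S.powerset, ∑ Y ∈ (S \ T).powerset, f T Y ((S \ T) \ Y)
    = ∑ Z ∈ S.powerset, ∑ T ∈ (S \ Z).powerset, f T ((S \ Z) \ T) Z := by
  rw [← Finset.sum_sigma (S.powerset) (fun T => (S \ T).powerset)
    (fun q => f q.1 q.2 ((S \ q.1) \ q.2))]
  rw [← Finset.sum_sigma (S.powerset) (fun Z => (S \ Z).powerset)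
    (fun q => f q.2 ((S \ q.1) \ q.2) q.1)]
  refine Finset.sum_nbij' (i := fun q => ⟨(S \ q.1) \ q.2, q.1⟩)
    (j := fun q => ⟨q.2, (S \ q.1) \ q.2⟩) ?_ ?_ ?_ ?_ ?_
  · rintro ⟨T, Y⟩ hq
    obtain ⟨hT, hY⟩ := Finset.mem_sigma.1 hq
    rw [Finset.mem_powerset] at hT hY
    refine Finset.mem_sigma.2 ⟨Finset.mem_powerset.2 (Finset.sdiff_subset.trans Finset.sdiff_subset), Finset.mem_powerset.2 ?_⟩
    intro a haT
    refine Finset.mem_sdiff.2 ⟨hT haT, fun h => ?_⟩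
    exact (Finset.mem_sdiff.1 (Finset.mem_sdiff.1 h).1).2 haT
  · rintro ⟨Z, T⟩ hq
    obtain ⟨hZ, hT⟩ := Finset.mem_sigma.1 hq
    rw [Finset.mem_powerset] at hZ hT
    refine Finset.mem_sigma.2 ⟨Finset.mem_powerset.2 (hT.trans Finset.sdiff_subset), Finset.mem_powerset.2 ?_⟩
    intro a ha
    have h1 := Finset.mem_sdiff.1 ha
    have h2 := Finset.mem_sdiff.1 h1.1
    exact Finset.mem_sdiff.2 ⟨h2.1, h1.2⟩
  · rintro ⟨T, Y⟩ hq
    obtain ⟨hT, hY⟩ := Finset.mem_sigma.1 hq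
    rw [Finset.mem_powerset] at hT hY
    refine Sigma.ext rfl (heq_of_eq ?_)
    show (S \ ((S \ T) \ Y)) \ T = Y
    exact sd_roundtrip1 hT hY
  · rintro ⟨Z, T⟩ hq
    obtain ⟨hZ, hT⟩ := Finset.mem_sigma.1 hq
    rw [Finset.mem_powerset] at hZ hT
    refine Sigma.ext ?_ (heq_of_eq rfl)
    show (S \ T) \ ((S \ Z) \ T) = Z
    exact sd_roundtrip2 hZ hT
  · rintro ⟨T, Y⟩ hq
    obtain ⟨hT, hY⟩ := Finset.mem_sigma.1 hq
    rw [Finset.mem_powerset] at hT hY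
    show f T Y ((S \ T) \ Y) = f T ((S \ ((S \ T) \ Y)) \ T) ((S \ T) \ Y)
    rw [sd_roundtrip1 hT hY]

/-! ### The core inequality -/

lemma core (C : ι → Finset (Fin m)) :
    ∀ (k : ℕ), ∀ (S : Finset ι), S.card ≤ k → S.Nonempty →
      ∀ μ : Finset (Fin m) → ℝ, IsProbMeasure μ → FKGCondition μ →
      0 ≤ - Epart (fun B => -(((B.card - 1).factorial : ℝ) * ups μ (B.sup C))) S := by
  intro k
  induction k with
  | zero =>
    intro S hcard hne μ _ _
    have := Finset.card_pos.2 hne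
    omega
  | succ k ih =>
    intro S hcard hne μ hμ hFKG
    obtain ⟨x, hx⟩ := hne
    set c : Finset ι → ℝ := fun B => -(((B.card - 1).factorial : ℝ) * ups μ (B.sup C)) with hc
    set S' := S.erase x with hS'
    have peel : - Epart c S = ∑ T' ∈ S'.powerset,
        ((T'.card.factorial : ℝ) * ups μ (C x ∪ T'.sup C)) * Epart c (S' \ T') := by
      rw [Epart_peel c hx, ← Finset.sum_neg_distrib]
      refine Finset.sum_nbij' (i := fun T => T.erase x) (j := fun T' => insert x T')
        ?_ ?_ ?_ ?_ ?_
      · intro T hT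
        obtain ⟨hTsub, hxT⟩ := Finset.mem_filter.1 hT
        rw [Finset.mem_powerset] at hTsub
        exact Finset.mem_powerset.2 (Finset.erase_subset_erase x hTsub)
      · intro T' hT'
        rw [Finset.mem_powerset] at hT'
        refine Finset.mem_filter.2 ⟨Finset.mem_powerset.2 ?_, Finset.mem_insert_self x T'⟩
        exact Finset.insert_subset hx (hT'.trans (Finset.erase_subset x S))
      · intro T hT
        exact Finset.insert_erase (Finset.mem_filter.1 hT).2
      · intro T' hT'
        rw [Finset.mem_powerset] at hT'
        have hxT' : x ∉ T' := fun h => (Finset.mem_erase.1 (hT' h)).1 rfl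
        exact Finset.erase_insert hxT'
      · intro T hT
        obtain ⟨hTsub, hxT⟩ := Finset.mem_filter.1 hT
        rw [Finset.mem_powerset] at hTsub
        have hxT' : x ∉ T.erase x := fun h => (Finset.mem_erase.1 h).1 rfl
        have hsd : S \ T = S' \ (T.erase x) := sdiff_eq_erase_sdiff hxT
        rw [hsd]
        have h1 : (T.card - 1) = (T.erase x).card := (Finset.card_erase_of_mem hxT).symm
        have h2 : T.sup C = C x ∪ (T.erase x).sup C := by
          conv_lhs => rw [← Finset.insert_erase hxT]
          rw [Finset.sup_insert, Finset.sup_eq_union]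
        have hcT : c T = -(((T.erase x).card.factorial : ℝ) * ups μ (C x ∪ (T.erase x).sup C)) := by
          rw [hc]
          dsimp only
          rw [h1, h2]
        rw [hcT]
        ring
    rcases eq_or_lt_of_le (ups_nonneg hμ.1 (C x)) with hcx | hcx
    · have hzero : ∀ T' : Finset ι, ups μ (C x ∪ T'.sup C) = 0 := by
        intro T'
        have h1 := ups_mono hμ.1 (Finset.subset_union_left (s₁ := C x) (s₂ := T'.sup C))
        have h2 := ups_nonneg hμ.1 (C x ∪ T'.sup C)
        rw [← hcx] at h1
        linarith
      rw [peel]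
      refine Finset.sum_nonneg fun T' _ => ?_
      rw [hzero T']
      simp
    · set μ' := condm μ (C x) with hμ'def
      have hμ' : IsProbMeasure μ' := condm_prob hμ hcx
      have hFKG' : FKGCondition μ' := condm_fkg hμ hFKG hcx
      have hups' : ∀ D : Finset (Fin m), ups μ (C x ∪ D) = ups μ (C x) * ups μ' D := by
        intro D
        rw [hμ'def, ups_condm]
        field_simp
      have hupge : ∀ D : Finset (Fin m), ups μ D ≤ ups μ' D := by
        intro D
        rw [hμ'def, ups_condm, le_div_iff₀ hcx]
        calc ups μ D * ups μ (C x) = ups μ (C x) * ups μ D := by ring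
          _ ≤ ups μ (C x ∪ D) := harris hμ hFKG (C x) D
      set cτ : Finset ι → ℝ := fun B => -(((B.card - 1).factorial : ℝ) * ups μ' (B.sup C))
        with hcτ
      set dh : Finset ι → ℝ := fun B => ((B.card - 1).factorial : ℝ) *
        (ups μ' (B.sup C) - ups μ (B.sup C)) with hdh
      have hsplit : c = fun B => cτ B + dh B := by
        funext B
        rw [hc, hcτ, hdh]
        dsimp only
        ring
      have hconv : ∀ X : Finset ι, Epart c X =
          ∑ Y ∈ X.powerset, Epart cτ Y * Epart dh (X \ Y) := by
        intro X
        rw [hsplit]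
        exact Epart_add cτ dh X
      have main : - Epart c S = ups μ (C x) * ∑ Z ∈ S'.powerset, Epart dh Z *
          ((1 - ((S' \ Z).card : ℝ)) * Epart cτ (S' \ Z)) := by
        rw [peel]
        have step1 : ∀ T' ∈ S'.powerset,
            ((T'.card.factorial : ℝ) * ups μ (C x ∪ T'.sup C)) * Epart c (S' \ T')
            = ∑ Y ∈ (S' \ T').powerset, ups μ (C x) *
                (((T'.card.factorial : ℝ) * ups μ' (T'.sup C)) *
                  (Epart cτ Y * Epart dh ((S' \ T') \ Y))) := by
          intro T' _
          rw [hconv, hups', Finset.mul_sum]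
          refine Finset.sum_congr rfl fun Y _ => ?_
          ring
        rw [Finset.sum_congr rfl step1]
        rw [sum_powerset_pair_reindex S' (fun T Y Z => ups μ (C x) *
          (((T.card.factorial : ℝ) * ups μ' (T.sup C)) * (Epart cτ Y * Epart dh Z)))]
        rw [Finset.mul_sum]
        refine Finset.sum_congr rfl fun Z _ => ?_
        have inner : ∑ T ∈ (S' \ Z).powerset, ups μ (C x) *
              (((T.card.factorial : ℝ) * ups μ' (T.sup C)) *
                (Epart cτ ((S' \ Z) \ T) * Epart dh Z))
            = ups μ (C x) * (Epart dh Z *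
                ∑ T ∈ (S' \ Z).powerset, ((T.card.factorial : ℝ) * ups μ' (T.sup C)) *
                  Epart cτ ((S' \ Z) \ T)) := by
          rw [Finset.mul_sum, Finset.mul_sum]
          refine Finset.sum_congr rfl fun T _ => ?_
          ring
        rw [inner]
        have hfact : ∑ T ∈ (S' \ Z).powerset, ((T.card.factorial : ℝ) * ups μ' (T.sup C)) *
              Epart cτ ((S' \ Z) \ T)
            = (1 - (((S' \ Z).card : ℕ) : ℝ)) * Epart cτ (S' \ Z) := by
          have ht : ups μ' ((∅ : Finset ι).sup C) = 1 := by
            rw [Finset.sup_empty]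
            show ups μ' (⊥ : Finset (Fin m)) = 1
            exact ups_empty hμ'
          have := Epart_fact_sum (fun T => ups μ' (T.sup C)) ht (S' \ Z)
          rw [← this]
        rw [hfact]
      rw [main]
      refine mul_nonneg hcx.le (Finset.sum_nonneg fun Z hZ => ?_)
      refine mul_nonneg ?_ ?_
      · refine Epart_nonneg (fun B => ?_) Z
        rw [hdh]
        dsimp only
        have h1 := hupge (B.sup C)
        have h2 : 0 ≤ ups μ' (B.sup C) - ups μ (B.sup C) := by linarith
        positivity
      · rcases (S' \ Z).eq_empty_or_nonempty with hW | hW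
        · rw [hW]
          simp [Epart_empty]
        · have hWcard : 1 ≤ (S' \ Z).card := Finset.card_pos.2 hW
          have hWle : (S' \ Z).card ≤ k := by
            have h1 : (S' \ Z).card ≤ S'.card := Finset.card_le_card Finset.sdiff_subset
            have h2 : S'.card = S.card - 1 := Finset.card_erase_of_mem hx
            omega
          have hIH := ih (S' \ Z) hWle hW μ' hμ' hFKG'
          have heq : (1 - (((S' \ Z).card : ℕ) : ℝ)) * Epart cτ (S' \ Z)
              = ((((S' \ Z).card : ℕ) : ℝ) - 1) * (- Epart cτ (S' \ Z)) := by ring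
          rw [heq]
          refine mul_nonneg ?_ hIH
          have : (1 : ℝ) ≤ (((S' \ Z).card : ℕ) : ℝ) := by exact_mod_cast hWcard
          linarith

/-! ### Connecting `Efun` on indicators with `Epart` -/

lemma setPartitions_eq_partitionsOf (n : ℕ) :
    setPartitions n = partitionsOf (Finset.univ : Finset (Fin n)) := by
  ext P
  rw [setPartitions, Finset.mem_filter, mem_partitionsOf]
  simp only [Finset.mem_univ, true_and]
  unfold IsSetPartition
  constructor
  · rintro ⟨h1, h2⟩
    exact ⟨fun B _ => Finset.subset_univ B, h1, fun x _ => h2 x⟩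
  · rintro ⟨_, h1, h2⟩
    exact ⟨h1, fun i => h2 i trivial⟩

lemma expect_prod_indicator (μ : Finset (Fin m) → ℝ) {n : ℕ} (C : Fin n → Finset (Fin m))
    (B : Finset (Fin n)) :
    _root_.expect μ (fun A => ∏ i ∈ B, (if C i ⊆ A then (1 : ℝ) else 0)) = ups μ (B.sup C) := by
  unfold _root_.expect ups
  refine Finset.sum_congr rfl fun A _ => ?_
  congr 1
  show (∏ i ∈ B, if C i ⊆ A then (1 : ℝ) else 0) = (if B.sup C ⊆ A then (1 : ℝ) else 0)
  rw [Finset.prod_boole]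
  by_cases h : B.sup C ⊆ A
  · have h1 : ∀ i ∈ B, C i ⊆ A := fun i hi =>
      Finset.Subset.trans (Finset.le_sup (f := C) hi) h
    rw [if_pos h1, if_pos h]
  · have h1 : ¬ ∀ i ∈ B, C i ⊆ A := fun hall => h (Finset.sup_le fun i hi => hall i hi)
    rw [if_neg h1, if_neg h]

lemma Efun_indicator_nonneg (μ : Finset (Fin m) → ℝ) (hμ : IsProbMeasure μ)
    (hFKG : FKGCondition μ) {n : ℕ} (hn : 1 ≤ n) (C : Fin n → Finset (Fin m)) :
    0 ≤ Efun μ (fun i => fun A => if C i ⊆ A then (1 : ℝ) else 0) := by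
  have hEfun : Efun μ (fun i => fun A => if C i ⊆ A then (1 : ℝ) else 0)
      = - Epart (fun B => -(((B.card - 1).factorial : ℝ) * ups μ (B.sup C)))
          (Finset.univ : Finset (Fin n)) := by
    unfold Efun Epart
    rw [setPartitions_eq_partitionsOf, ← Finset.sum_neg_distrib]
    refine Finset.sum_congr rfl fun P hP => ?_
    have hexp : ∀ B ∈ P, _root_.expect μ (fun A => ∏ i ∈ B, (if C i ⊆ A then (1 : ℝ) else 0))
        = ups μ (B.sup C) := fun B _ => expect_prod_indicator μ C B
    rw [Finset.prod_congr rfl hexp]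
    have hneg : ∏ B ∈ P, -(((B.card - 1).factorial : ℝ) * ups μ (B.sup C))
        = (-1 : ℝ) ^ P.card * ∏ B ∈ P, (((B.card - 1).factorial : ℝ) * ups μ (B.sup C)) := by
      calc ∏ B ∈ P, -(((B.card - 1).factorial : ℝ) * ups μ (B.sup C))
          = ∏ B ∈ P, ((-1 : ℝ) * (((B.card - 1).factorial : ℝ) * ups μ (B.sup C))) := by
            refine Finset.prod_congr rfl fun B _ => by ring
        _ = (∏ _B ∈ P, (-1 : ℝ)) * ∏ B ∈ P, (((B.card - 1).factorial : ℝ) * ups μ (B.sup C)) :=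
            Finset.prod_mul_distrib
        _ = (-1 : ℝ) ^ P.card * ∏ B ∈ P, (((B.card - 1).factorial : ℝ) * ups μ (B.sup C)) := by
            rw [Finset.prod_const]
    rw [hneg, Finset.prod_mul_distrib, pow_succ]
    ring
  rw [hEfun]
  refine core C n Finset.univ ?_ ?_ μ hμ hFKG
  · rw [Finset.card_univ, Fintype.card_fin]
  · exact ⟨⟨0, hn⟩, Finset.mem_univ _⟩

/-! ### Multilinearity of `Efun` -/

lemma expect_congr (μ : Finset (Fin m) → ℝ) {f g : Finset (Fin m) → ℝ}
    (h : ∀ A, f A = g A) : _root_.expect μ f = _root_.expect μ g := by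
  unfold _root_.expect
  exact Finset.sum_congr rfl fun A _ => by rw [h A]

/-- `Efun` as a multilinear map in the `n` functions. -/
def EfunML (μ : Finset (Fin m) → ℝ) (n : ℕ) :
    MultilinearMap ℝ (fun _ : Fin n => (Finset (Fin m) → ℝ)) ℝ where
  toFun f := Efun μ f
  map_update_add' := by
    intro dec f j x y
    unfold Efun
    rw [← Finset.sum_add_distrib]
    refine Finset.sum_congr rfl fun P hP => ?_
    have hsp : IsSetPartition P := by
      rw [setPartitions, Finset.mem_filter] at hP
      exact hP.2
    obtain ⟨B₀, ⟨hB₀P, hjB₀⟩, huniq⟩ := hsp.2 j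
    have hnotin : ∀ B ∈ P.erase B₀, j ∉ B := by
      intro B hB hjB
      have hBeq : B = B₀ := huniq B ⟨Finset.mem_of_mem_erase hB, hjB⟩
      exact (Finset.mem_erase.1 hB).1 hBeq
    have hprod : ∀ (z : Finset (Fin m) → ℝ), ∀ B ∈ P.erase B₀,
        _root_.expect μ (fun A => ∏ i ∈ B, Function.update f j z i A)
        = _root_.expect μ (fun A => ∏ i ∈ B, f i A) := by
      intro z B hB
      refine expect_congr μ fun A => Finset.prod_congr rfl fun i hi => ?_
      rw [Function.update_of_ne (fun h => hnotin B hB (by rw [← h]; exact hi)) _ _]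
    have hblock : ∀ (z : Finset (Fin m) → ℝ),
        (fun A => ∏ i ∈ B₀, Function.update f j z i A)
        = fun A => z A * ∏ i ∈ B₀.erase j, f i A := by
      intro z
      funext A
      rw [← Finset.mul_prod_erase B₀ (fun i => Function.update f j z i A) hjB₀,
        Function.update_self]
      congr 1
      refine Finset.prod_congr rfl fun i hi => ?_
      rw [Function.update_of_ne (Finset.mem_erase.1 hi).1 _ _]
    have hfull : ∀ (z : Finset (Fin m) → ℝ),
        ∏ B ∈ P, _root_.expect μ (fun A => ∏ i ∈ B, Function.update f j z i A)
        = _root_.expect μ (fun A => z A * ∏ i ∈ B₀.erase j, f i A) *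
            ∏ B ∈ P.erase B₀, _root_.expect μ (fun A => ∏ i ∈ B, f i A) := by
      intro z
      rw [← Finset.mul_prod_erase P _ hB₀P]
      congr 1
      · rw [hblock z]
      · exact Finset.prod_congr rfl (hprod z)
    rw [hfull, hfull, hfull]
    have hadd : _root_.expect μ (fun A => (x + y) A * ∏ i ∈ B₀.erase j, f i A)
        = _root_.expect μ (fun A => x A * ∏ i ∈ B₀.erase j, f i A)
          + _root_.expect μ (fun A => y A * ∏ i ∈ B₀.erase j, f i A) := by
      unfold _root_.expect
      rw [← Finset.sum_add_distrib]
      refine Finset.sum_congr rfl fun A _ => ?_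
      simp only [Pi.add_apply]
      ring
    rw [hadd]
    ring
  map_update_smul' := by
    intro dec f j r x
    unfold Efun
    rw [smul_eq_mul, Finset.mul_sum]
    refine Finset.sum_congr rfl fun P hP => ?_
    have hsp : IsSetPartition P := by
      rw [setPartitions, Finset.mem_filter] at hP
      exact hP.2
    obtain ⟨B₀, ⟨hB₀P, hjB₀⟩, huniq⟩ := hsp.2 j
    have hnotin : ∀ B ∈ P.erase B₀, j ∉ B := by
      intro B hB hjB
      have hBeq : B = B₀ := huniq B ⟨Finset.mem_of_mem_erase hB, hjB⟩
      exact (Finset.mem_erase.1 hB).1 hBeq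
    have hprod : ∀ (z : Finset (Fin m) → ℝ), ∀ B ∈ P.erase B₀,
        _root_.expect μ (fun A => ∏ i ∈ B, Function.update f j z i A)
        = _root_.expect μ (fun A => ∏ i ∈ B, f i A) := by
      intro z B hB
      refine expect_congr μ fun A => Finset.prod_congr rfl fun i hi => ?_
      rw [Function.update_of_ne (fun h => hnotin B hB (by rw [← h]; exact hi)) _ _]
    have hblock : ∀ (z : Finset (Fin m) → ℝ),
        (fun A => ∏ i ∈ B₀, Function.update f j z i A)
        = fun A => z A * ∏ i ∈ B₀.erase j, f i A := by
      intro z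
      funext A
      rw [← Finset.mul_prod_erase B₀ (fun i => Function.update f j z i A) hjB₀,
        Function.update_self]
      congr 1
      refine Finset.prod_congr rfl fun i hi => ?_
      rw [Function.update_of_ne (Finset.mem_erase.1 hi).1 _ _]
    have hfull : ∀ (z : Finset (Fin m) → ℝ),
        ∏ B ∈ P, _root_.expect μ (fun A => ∏ i ∈ B, Function.update f j z i A)
        = _root_.expect μ (fun A => z A * ∏ i ∈ B₀.erase j, f i A) *
            ∏ B ∈ P.erase B₀, _root_.expect μ (fun A => ∏ i ∈ B, f i A) := by
      intro z
      rw [← Finset.mul_prod_erase P _ hB₀P]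
      congr 1
      · rw [hblock z]
      · exact Finset.prod_congr rfl (hprod z)
    rw [hfull, hfull]
    have hsmul : _root_.expect μ (fun A => (r • x) A * ∏ i ∈ B₀.erase j, f i A)
        = r * _root_.expect μ (fun A => x A * ∏ i ∈ B₀.erase j, f i A) := by
      unfold _root_.expect
      rw [Finset.mul_sum]
      refine Finset.sum_congr rfl fun A _ => ?_
      simp only [Pi.smul_apply, smul_eq_mul]
      ring
    rw [hsmul]
    ring

/-! ### Main theorem -/

theorem series_coefficients_nonneg
    {m : ℕ} (μ : Finset (Fin m) → ℝ) (hμ : IsProbMeasure μ) (hFKG : FKGCondition μ)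
    (p : ℕ → Finset (Fin m) → ℝ)
    (hp : ∀ k, 1 ≤ k → ∃ (J : ℕ) (a : Fin J → ℝ) (Cs : Fin J → Finset (Fin m)),
      (∀ j, 0 ≤ a j) ∧
      ∀ A : Finset (Fin m), p k A = ∑ j, a j * (if Cs j ⊆ A then (1 : ℝ) else 0))
    (N : ℕ) (hN : 1 ≤ N) :
    0 ≤ ∑ n ∈ Finset.Icc 1 N, (1 / (n.factorial : ℝ)) *
      ∑ iv ∈ (Finset.Nat.antidiagonalTuple n N).filter (fun iv => ∀ j, 1 ≤ iv j),
        Efun μ (fun j => p (iv j)) := by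
  refine Finset.sum_nonneg fun n hn => ?_
  have hn1 : 1 ≤ n := (Finset.mem_Icc.1 hn).1
  refine mul_nonneg (by positivity) (Finset.sum_nonneg fun iv hiv => ?_)
  have hiv1 : ∀ j, 1 ≤ iv j := (Finset.mem_filter.1 hiv).2
  choose J a Cs ha hrep using fun j : Fin n => hp (iv j) (hiv1 j)
  have hfun : (fun j : Fin n => p (iv j))
      = fun j => ∑ l ∈ (Finset.univ : Finset (Fin (J j))),
          (a j l) • (fun A => if Cs j l ⊆ A then (1 : ℝ) else 0) := by
    funext j
    funext A
    rw [hrep j A, Finset.sum_apply]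
    refine Finset.sum_congr rfl fun l _ => ?_
    simp only [Pi.smul_apply, smul_eq_mul]
  have hml : Efun μ (fun j => p (iv j)) = EfunML μ n (fun j => p (iv j)) := rfl
  rw [hml, hfun]
  rw [(EfunML μ n).map_sum_finset
    (fun j l => (a j l) • (fun A => if Cs j l ⊆ A then (1 : ℝ) else 0))
    (fun _ => Finset.univ)]
  refine Finset.sum_nonneg fun r _ => ?_
  rw [(EfunML μ n).map_smul_univ (fun j => a j (r j))
    (fun j => fun A => if Cs j (r j) ⊆ A then (1 : ℝ) else 0)]
  rw [smul_eq_mul]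
  refine mul_nonneg (Finset.prod_nonneg fun j _ => ha j (r j)) ?_
  exact Efun_indicator_nonneg μ hμ hFKG hn1 (fun j => Cs j (r j))

end
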